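/- arXiv:2304.14842 — 5 statements merged into one kernel-verified Lean document; each statement's English description precedes it below -/
import Mathlib

section
/- Let S = K[x_1,...,x_m] be a polynomial ring over a field K, let 1 ≤ j < m, and let X = (x_1,...,x_j) and Y = (x_{j+1},...,x_m) be the ideals generated by the indicated variables. For u ≥ 1, the ideal J = (X² + Y²)^u is minimally generated exactly by the monomials x^a·y^b (where x^a is a monomial in the X-variables of total degree a and y^b a monomial in the Y-variables of total degree b) with a + b = 2u and both a and b even. -/
/-!
A monomial ideal is spanned by its monomials, and the product of two monomial ideals by the
products of their generators. Hence `(X² + Y²)^u` is spanned by products of `u` quadrics, each a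
quadric in the `x`'s or in the `y`'s: these are the monomials `x^a y^b` with `a`, `b` even and
`a + b = 2u`, and conversely `x^{2k} y^{2l} ∈ (X²)^k (Y²)^l`. All these generators have the same
degree `2u`, so none divides another, and in a monomial ideal this means none is redundant.
-/

open MvPolynomial

/-- The set of monomials `x^a y^b` with `a + b = 2u` and both `a` and `b` even,
where `a` is the total degree in the first `j` variables and `b` the total degree
in the remaining variables. -/
def evenSplitGens (K : Type*) [Field K] (m j u : ℕ) : Set (MvPolynomial (Fin m) K) :=
  {p | ∃ d : Fin m →₀ ℕ, p = monomial d 1 ∧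
    (∑ i : Fin m, if (i : ℕ) < j then d i else 0) + (∑ i : Fin m, if j ≤ (i : ℕ) then d i else 0) = 2 * u ∧
    Even (∑ i : Fin m, if (i : ℕ) < j then d i else 0) ∧
    Even (∑ i : Fin m, if j ≤ (i : ℕ) then d i else 0)}

namespace Finsupp

theorem eq_of_le_of_degree_eq {σ : Type*} {d e : σ →₀ ℕ} (hle : e ≤ d)
    (hdeg : e.degree = d.degree) : e = d := by
  have h := congrArg degree (add_tsub_cancel_of_le hle)
  rw [map_add, ← hdeg, add_eq_left, degree_eq_zero_iff, tsub_eq_zero_iff_le] at h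
  exact le_antisymm hle h

variable {σ : Type*} [Fintype σ]

def partialDegree (p : σ → Prop) [DecidablePred p] (d : σ →₀ ℕ) : ℕ :=
  ∑ i, if p i then d i else 0

variable {p q : σ → Prop} [DecidablePred p] [DecidablePred q]

theorem partialDegree_add (d e : σ →₀ ℕ) :
    partialDegree p (d + e) = partialDegree p d + partialDegree p e := by
  simp only [partialDegree, ← Finset.sum_add_distrib, add_apply]
  exact Finset.sum_congr rfl fun i _ => by split_ifs <;> simp

theorem partialDegree_single_one (i : σ) :
    partialDegree p (single i 1) = if p i then 1 else 0 := by
  rw [partialDegree, Finset.sum_eq_single i (fun i' _ hi' => by simp [hi'.symm])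
    (by simp)]
  simp

theorem partialDegree_add_partialDegree (hpq : ∀ i, q i ↔ ¬ p i) (d : σ →₀ ℕ) :
    partialDegree p d + partialDegree q d = d.degree := by
  simp only [partialDegree, degree_eq_sum, ← Finset.sum_add_distrib]
  exact Finset.sum_congr rfl fun i _ => by by_cases h : p i <;> simp [h, hpq]

end Finsupp

namespace MvPolynomial

open Finsupp

theorem monomial_one_notMem_span_of_degree_eq {σ R : Type*} [CommSemiring R] [Nontrivial R]
    {S : Set (σ →₀ ℕ)} {d : σ →₀ ℕ} (hS : ∀ e ∈ S, e.degree = d.degree)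
    (hd : d ∉ S) :
    monomial d (1 : R) ∉ Ideal.span ((monomial · 1) '' S) := by
  classical
  rw [mem_ideal_span_monomial_image]
  intro h
  obtain ⟨e, he, hle⟩ := h d (by simp)
  exact hd (eq_of_le_of_degree_eq hle (hS e he) ▸ he)

variable {σ R : Type*} [Fintype σ] [CommSemiring R]
variable {p q : σ → Prop} [DecidablePred p] [DecidablePred q]

variable (p q) in
def evenSplitExponents (u : ℕ) : Set (σ →₀ ℕ) :=
  {d | partialDegree p d + partialDegree q d = 2 * u ∧
    Even (partialDegree p d) ∧ Even (partialDegree q d)}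

theorem evenSplitExponents_comm (u : ℕ) :
    evenSplitExponents p q u = evenSplitExponents q p u := by
  ext d
  simp only [evenSplitExponents, Set.mem_ofPred_eq, add_comm (partialDegree p d), and_comm]

theorem add_mem_evenSplitExponents {u v : ℕ} {d e : σ →₀ ℕ}
    (hd : d ∈ evenSplitExponents p q u) (he : e ∈ evenSplitExponents p q v) :
    d + e ∈ evenSplitExponents p q (u + v) := by
  obtain ⟨hd, hdp, hdq⟩ := hd
  obtain ⟨he, hep, heq⟩ := he
  refine ⟨?_, ?_, ?_⟩ <;> simp only [partialDegree_add]
  · omega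
  · exact hdp.add hep
  · exact hdq.add heq

theorem degree_of_mem_evenSplitExponents (hpq : ∀ i, q i ↔ ¬ p i) {u : ℕ} {d : σ →₀ ℕ}
    (hd : d ∈ evenSplitExponents p q u) : d.degree = 2 * u := by
  rw [← partialDegree_add_partialDegree hpq, hd.1]

theorem span_evenSplit_mul_span_evenSplit_le (u v : ℕ) :
    Ideal.span ((monomial · (1 : R)) '' evenSplitExponents p q u) *
        Ideal.span ((monomial · 1) '' evenSplitExponents p q v) ≤
      Ideal.span ((monomial · 1) '' evenSplitExponents p q (u + v)) := by
  rw [Ideal.span_mul_span', Ideal.span_le]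
  rintro _ ⟨_, ⟨d, hd, rfl⟩, _, ⟨e, he, rfl⟩, rfl⟩
  dsimp only
  rw [monomial_mul, mul_one]
  exact Ideal.subset_span ⟨d + e, add_mem_evenSplitExponents hd he, rfl⟩

theorem span_X_sq_le_span_evenSplit (hpq : ∀ i, p i → ¬ q i) :
    Ideal.span ((X : σ → MvPolynomial σ R) '' {i | p i}) ^ 2 ≤
      Ideal.span ((monomial · 1) '' evenSplitExponents p q 1) := by
  rw [sq, Ideal.span_mul_span', Ideal.span_le]
  rintro _ ⟨_, ⟨a, ha, rfl⟩, _, ⟨b, hb, rfl⟩, rfl⟩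
  have hdeg : ∀ i, p i →
      partialDegree p (single i 1) = 1 ∧ partialDegree q (single i 1) = 0 :=
    fun i hi => by simp [partialDegree_single_one, hi, hpq i hi]
  refine Ideal.subset_span
    ⟨single a 1 + single b 1, ?_, by simp only [X, monomial_mul, mul_one]⟩
  simp only [evenSplitExponents, Set.mem_ofPred_eq, partialDegree_add, (hdeg a ha).1,
    (hdeg a ha).2, (hdeg b hb).1, (hdeg b hb).2]
  decide

theorem pow_le_span_evenSplit (hpq : ∀ i, q i ↔ ¬ p i) (u : ℕ) :
    (Ideal.span ((X : σ → MvPolynomial σ R) '' {i | p i}) ^ 2 +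
        Ideal.span (X '' {i | q i}) ^ 2) ^ u ≤
      Ideal.span ((monomial · 1) '' evenSplitExponents p q u) := by
  induction u with
  | zero =>
    rw [pow_zero, Ideal.one_eq_top, top_le_iff, Ideal.eq_top_iff_one]
    exact Ideal.subset_span ⟨0, by simp [evenSplitExponents, partialDegree], rfl⟩
  | succ u ih =>
    have hI := span_X_sq_le_span_evenSplit (R := R) (q := q) fun i hp hq => (hpq i).1 hq hp
    have hJ := span_X_sq_le_span_evenSplit (R := R) (q := p) fun i hq => (hpq i).1 hq
    rw [← evenSplitExponents_comm] at hJ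
    rw [pow_succ]
    exact (Ideal.mul_mono ih (sup_le hI hJ)).trans (span_evenSplit_mul_span_evenSplit_le u 1)

theorem monomial_one_mem_pow_mul_pow (hpq : ∀ i, q i ↔ ¬ p i) {I J : Ideal (MvPolynomial σ R)}
    (hI : ∀ i, p i → X i ∈ I) (hJ : ∀ i, q i → X i ∈ J) (d : σ →₀ ℕ) :
    monomial d 1 ∈ I ^ partialDegree p d * J ^ partialDegree q d := by
  have hmem : monomial d (1 : R) ∈ ∏ i, (if p i then I else J) ^ d i := by
    rw [monic_monomial_eq, Finsupp.prod_pow]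
    refine Ideal.prod_mem_prod fun i _ => Ideal.pow_mem_pow ?_ _
    split_ifs with h
    · exact hI i h
    · exact hJ i ((hpq i).2 h)
  have hfilter : Finset.univ.filter (fun i => ¬ p i) = Finset.univ.filter q :=
    Finset.filter_congr fun i _ => (hpq i).symm
  have hprod :
      ∏ i, (if p i then I else J) ^ d i = I ^ partialDegree p d * J ^ partialDegree q d := by
    simp_rw [ite_pow]
    rw [Finset.prod_ite, Finset.prod_pow_eq_pow_sum, Finset.prod_pow_eq_pow_sum, hfilter,
      partialDegree, partialDegree, Finset.sum_filter, Finset.sum_filter]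
  exact hprod ▸ hmem

theorem span_evenSplit_le_pow (hpq : ∀ i, q i ↔ ¬ p i) (u : ℕ) :
    Ideal.span ((monomial · 1) '' evenSplitExponents p q u) ≤
      (Ideal.span ((X : σ → MvPolynomial σ R) '' {i | p i}) ^ 2 +
        Ideal.span (X '' {i | q i}) ^ 2) ^ u := by
  rw [Ideal.span_le]
  rintro _ ⟨d, ⟨hsum, ⟨k, hk⟩, ⟨l, hl⟩⟩, rfl⟩
  have hmem := monomial_one_mem_pow_mul_pow (R := R) hpq
    (I := Ideal.span (X '' {i | p i})) (J := Ideal.span (X '' {i | q i}))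
    (fun i hi => Ideal.subset_span ⟨i, hi, rfl⟩)
    (fun i hi => Ideal.subset_span ⟨i, hi, rfl⟩) d
  rw [hk, hl, ← two_mul, ← two_mul, pow_mul, pow_mul] at hmem
  have hu : u = k + l := by omega
  rw [hu, pow_add]
  exact Ideal.mul_mono (Ideal.pow_right_mono le_sup_left k)
    (Ideal.pow_right_mono le_sup_right l) hmem

theorem span_X_sq_add_span_X_sq_pow (hpq : ∀ i, q i ↔ ¬ p i) (u : ℕ) :
    (Ideal.span ((X : σ → MvPolynomial σ R) '' {i | p i}) ^ 2 +
        Ideal.span (X '' {i | q i}) ^ 2) ^ u =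
      Ideal.span ((monomial · 1) '' evenSplitExponents p q u) :=
  le_antisymm (pow_le_span_evenSplit hpq u) (span_evenSplit_le_pow hpq u)

end MvPolynomial

theorem stmt_0_general {K : Type*} [Field K] (m j u : ℕ) :
    ((Ideal.span ((X : Fin m → MvPolynomial (Fin m) K) '' {i | (i : ℕ) < j}) ^ 2 +
      Ideal.span ((X : Fin m → MvPolynomial (Fin m) K) '' {i | j ≤ (i : ℕ)}) ^ 2) ^ u =
        Ideal.span (evenSplitGens K m j u)) ∧
    (∀ g ∈ evenSplitGens K m j u, g ∉ Ideal.span (evenSplitGens K m j u \ {g})) := by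
  have hpq : ∀ i : Fin m, j ≤ (i : ℕ) ↔ ¬ (i : ℕ) < j := fun _ => not_lt.symm
  have hgens : evenSplitGens K m j u = (monomial · 1) ''
      evenSplitExponents (fun i : Fin m => (i : ℕ) < j) (fun i => j ≤ (i : ℕ)) u :=
    Set.ext fun _ =>
      ⟨fun ⟨d, hg, hd⟩ => ⟨d, hd, hg.symm⟩, fun ⟨d, hd, hg⟩ => ⟨d, hg.symm, hd⟩⟩
  refine ⟨hgens ▸ span_X_sq_add_span_X_sq_pow hpq u, ?_⟩
  rintro _ ⟨d, rfl, hd⟩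
  rw [hgens, ← Set.image_singleton (f := (monomial · (1 : K))),
    ← Set.image_sdiff (monomial_left_injective one_ne_zero)]
  refine monomial_one_notMem_span_of_degree_eq (fun e he => ?_) fun h => h.2 rfl
  rw [degree_of_mem_evenSplitExponents hpq he.1, degree_of_mem_evenSplitExponents hpq hd]

theorem stmt_0 {K : Type*} [Field K] (m j u : ℕ) (hm : 3 ≤ m) (hj1 : 1 ≤ j) (hjm : j < m)
    (hu : 1 ≤ u) :
    ((Ideal.span ((X : Fin m → MvPolynomial (Fin m) K) '' {i | (i : ℕ) < j}) ^ 2 +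
      Ideal.span ((X : Fin m → MvPolynomial (Fin m) K) '' {i | j ≤ (i : ℕ)}) ^ 2) ^ u =
        Ideal.span (evenSplitGens K m j u)) ∧
    (∀ g ∈ evenSplitGens K m j u, g ∉ Ideal.span (evenSplitGens K m j u \ {g})) :=
  stmt_0_general m j u
end

section
/- Let S = K[x_1,...,x_m] with m ≥ 3, 1 ≤ j < m, X = (x_1,...,x_j), Y = (x_{j+1},...,x_m), m = X + Y, u ≥ 1 and J = (X² + Y²)^u. Then no monomial of degree 2u − 1 lies in the colon ideal J : m. Consequently the socle of A = S/J is concentrated in degree 2u, i.e., A is a level algebra of socle degree 2u. -/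
/-!
Write `a` and `b` for the degrees of a monomial `x^d` in the variables `X` and `Y`. The ideal
`J = (X² + Y²)^u` is the monomial ideal of the exponents with `⌊a/2⌋ + ⌊b/2⌋ ≥ u`, so a polynomial
lies in `J` or in `J : m` exactly when each of its monomials does. If `x^d ∉ J` but `x_i x^d ∈ J`
for every variable, then multiplying by a variable of `X` must raise `⌊a/2⌋` and multiplying by
one of `Y` must raise `⌊b/2⌋`: both `a` and `b` are odd and `⌊a/2⌋ + ⌊b/2⌋ = u - 1`, so
`a + b = 2u`. The monomial `x_1 x_{j+1}^{2u-1}` shows that this degree does occur.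
-/

open MvPolynomial
open scoped Pointwise

namespace MvPolynomial

variable {σ R : Type*} [CommSemiring R]

theorem restrictSupportIdeal_mul_le {S T U : Set (σ →₀ ℕ)} {hS : IsUpperSet S}
    {hT : IsUpperSet T} {hU : IsUpperSet U} (h : S + T ⊆ U) :
    restrictSupportIdeal R S hS * restrictSupportIdeal R T hT ≤ restrictSupportIdeal R U hU := by
  classical
  refine Ideal.mul_le.mpr fun p hp q hq d hd => h ?_
  obtain ⟨e, he, f, hf, rfl⟩ := Finset.mem_add.mp (support_mul p q hd)
  exact Set.add_mem_add (hp he) (hq hf)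

theorem mem_colon_idealOfVars_iff {I : Ideal (MvPolynomial σ R)} {p : MvPolynomial σ R} :
    p ∈ I.colon (idealOfVars σ R) ↔ ∀ i, X i * p ∈ I := by
  simp only [idealOfVars, Ideal.colon_span, Submodule.mem_colon, Set.forall_mem_range, smul_eq_mul,
    mul_comm p]

noncomputable abbrev blockDegree (s : Set σ) : (σ →₀ ℕ) →+ ℕ := Finsupp.weight (s.indicator 1)

theorem blockDegree_single (s : Set σ) (i : σ) (n : ℕ) [Decidable (i ∈ s)] :
    blockDegree s (Finsupp.single i n) = if i ∈ s then n else 0 := by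
  simp [Finsupp.weight_single, Set.indicator_apply]

theorem blockDegree_single_add_single {s : Set σ} {i₀ i₁ : σ} (hi₀ : i₀ ∈ s) (hi₁ : i₁ ∉ s)
    (a b : ℕ) :
    blockDegree s (Finsupp.single i₀ a + Finsupp.single i₁ b) = a ∧
      blockDegree sᶜ (Finsupp.single i₀ a + Finsupp.single i₁ b) = b := by
  classical
  simp only [map_add, blockDegree_single, Set.mem_compl_iff, hi₀, hi₁, not_true_eq_false,
    not_false_eq_true, ↓reduceIte, add_zero, zero_add, and_self]

theorem blockDegree_add_blockDegree_compl (s : Set σ) (d : σ →₀ ℕ) :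
    blockDegree s d + blockDegree sᶜ d = d.degree := by
  simp only [Finsupp.weight_apply, Finsupp.degree_apply, Finsupp.sum, smul_eq_mul,
    ← Finset.sum_add_distrib, ← mul_add, Set.indicator_self_add_compl_apply, Pi.one_apply, mul_one]

theorem blockDegree_mono (s : Set σ) : Monotone (blockDegree s) := by
  intro d e hde
  obtain ⟨f, rfl⟩ := le_iff_exists_add.mp hde
  simp

theorem one_le_blockDegree_of_mem_span_X {s : Set σ} {p : MvPolynomial σ R}
    (hp : p ∈ Ideal.span (X '' s)) {d : σ →₀ ℕ} (hd : d ∈ p.support) : 1 ≤ blockDegree s d := by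
  obtain ⟨i, hi, hdi⟩ := mem_ideal_span_X_image.mp hp d hd
  exact (Nat.one_le_iff_ne_zero.mpr hdi).trans
    (Finsupp.le_weight (s.indicator 1) (s := i) (by simp [hi]) d)

theorem monomial_one_mem_span_X_pow_mul (s : Set σ) (d : σ →₀ ℕ) :
    monomial d (1 : R) ∈
      Ideal.span (X '' s) ^ blockDegree s d * Ideal.span (X '' sᶜ) ^ blockDegree sᶜ d := by
  classical
  induction d using Finsupp.induction_linear with
  | zero => simp
  | add f g hf hg =>
    rw [← one_mul (1 : R), ← monomial_mul, map_add, map_add, pow_add, pow_add,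
      mul_mul_mul_comm]
    exact Ideal.mul_mem_mul hf hg
  | single i n =>
    rw [← X_pow_eq_monomial, blockDegree_single, blockDegree_single]
    by_cases hi : i ∈ s
    · simpa [hi] using Ideal.pow_mem_pow (Ideal.subset_span (Set.mem_image_of_mem X hi)) n
    · simpa [hi] using Ideal.pow_mem_pow
        (Ideal.subset_span (Set.mem_image_of_mem X (Set.mem_compl hi))) n

noncomputable def squareCount (s : Set σ) (d : σ →₀ ℕ) : ℕ :=
  blockDegree s d / 2 + blockDegree sᶜ d / 2

theorem squareCount_mono (s : Set σ) : Monotone (squareCount s) := fun _ _ hde =>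
  add_le_add (Nat.div_le_div_right (blockDegree_mono s hde))
    (Nat.div_le_div_right (blockDegree_mono sᶜ hde))

theorem squareCount_add_squareCount_le (s : Set σ) (d e : σ →₀ ℕ) :
    squareCount s d + squareCount s e ≤ squareCount s (d + e) := by
  simp only [squareCount, map_add]
  omega

theorem span_X_image_sq_le_restrictSupportIdeal {s : Set σ} {S : Set (σ →₀ ℕ)}
    (hS : IsUpperSet S) (h : ∀ d, 2 ≤ blockDegree s d → d ∈ S) :
    Ideal.span (X '' s) ^ 2 ≤ restrictSupportIdeal R S hS := by
  classical
  refine (pow_two (Ideal.span (X '' s))).le.trans (Ideal.mul_le.mpr fun p hp q hq d hd => h d ?_)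
  obtain ⟨e, he, f, hf, rfl⟩ := Finset.mem_add.mp (support_mul p q hd)
  have := one_le_blockDegree_of_mem_span_X hp he
  have := one_le_blockDegree_of_mem_span_X hq hf
  rw [map_add]
  omega

theorem monomial_one_mem_span_X_sq_add_span_X_compl_sq_pow {s : Set σ} {u : ℕ} {d : σ →₀ ℕ}
    (h : u ≤ squareCount s d) :
    monomial d (1 : R) ∈ (Ideal.span (X '' s) ^ 2 + Ideal.span (X '' sᶜ) ^ 2) ^ u := by
  set I : Ideal (MvPolynomial σ R) := Ideal.span (X '' s)
  set I' : Ideal (MvPolynomial σ R) := Ideal.span (X '' sᶜ)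
  refine (?_ : I ^ blockDegree s d * I' ^ blockDegree sᶜ d ≤ _)
    (monomial_one_mem_span_X_pow_mul s d)
  calc I ^ blockDegree s d * I' ^ blockDegree sᶜ d
      ≤ (I ^ 2) ^ (blockDegree s d / 2) * (I' ^ 2) ^ (blockDegree sᶜ d / 2) := by
        rw [← pow_mul, ← pow_mul]
        exact Ideal.mul_mono (Ideal.pow_le_pow_right (Nat.mul_div_le _ _))
          (Ideal.pow_le_pow_right (Nat.mul_div_le _ _))
    _ ≤ (I ^ 2 + I' ^ 2) ^ (blockDegree s d / 2) * (I ^ 2 + I' ^ 2) ^ (blockDegree sᶜ d / 2) :=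
        Ideal.mul_mono (Ideal.pow_right_mono le_sup_left _) (Ideal.pow_right_mono le_sup_right _)
    _ ≤ (I ^ 2 + I' ^ 2) ^ u := by
        rw [← pow_add]
        exact Ideal.pow_le_pow_right h

variable (R) in
theorem span_X_sq_add_span_X_compl_sq_pow_eq (s : Set σ) (u : ℕ) :
    (Ideal.span (X '' s) ^ 2 + Ideal.span (X '' sᶜ) ^ 2) ^ u =
      restrictSupportIdeal R {d | u ≤ squareCount s d}
        ((isUpperSet_Ici u).preimage (squareCount_mono s)) := by
  refine le_antisymm ?_ fun p hp => ?_
  · induction u with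
    | zero => exact fun _ _ _ _ => Nat.zero_le _
    | succ u ih =>
      have base : Ideal.span (X '' s) ^ 2 + Ideal.span (X '' sᶜ) ^ 2 ≤
          restrictSupportIdeal R {d | 1 ≤ squareCount s d}
            ((isUpperSet_Ici 1).preimage (squareCount_mono s)) :=
        sup_le (span_X_image_sq_le_restrictSupportIdeal _ fun d hd => by
            simp only [Set.mem_ofPred_eq, squareCount]; omega)
          (span_X_image_sq_le_restrictSupportIdeal _ fun d hd => by
            simp only [Set.mem_ofPred_eq, squareCount]; omega)
      refine (pow_succ _ u).le.trans ((Ideal.mul_mono ih base).trans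
        (restrictSupportIdeal_mul_le ?_))
      rintro _ ⟨d, hd, e, he, rfl⟩
      exact (add_le_add hd he).trans (squareCount_add_squareCount_le s d e)
  · rw [p.as_sum]
    refine Ideal.sum_mem _ fun d hd => ?_
    rw [← mul_one (coeff d p), ← C_mul_monomial]
    exact Ideal.mul_mem_left _ _ (monomial_one_mem_span_X_sq_add_span_X_compl_sq_pow (hp hd))

theorem mem_span_X_sq_add_span_X_compl_sq_pow_iff {s : Set σ} {u : ℕ} {p : MvPolynomial σ R} :
    p ∈ (Ideal.span (X '' s) ^ 2 + Ideal.span (X '' sᶜ) ^ 2) ^ u ↔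
      ∀ d ∈ p.support, u ≤ squareCount s d := by
  rw [span_X_sq_add_span_X_compl_sq_pow_eq]
  rfl

theorem mem_colon_idealOfVars_iff_squareCount {s : Set σ} {u : ℕ} {p : MvPolynomial σ R} :
    p ∈ ((Ideal.span (X '' s) ^ 2 + Ideal.span (X '' sᶜ) ^ 2) ^ u).colon (idealOfVars σ R) ↔
      ∀ i, ∀ d ∈ p.support, u ≤ squareCount s (Finsupp.single i 1 + d) := by
  classical
  simp only [mem_colon_idealOfVars_iff, mem_span_X_sq_add_span_X_compl_sq_pow_iff, support_X_mul,
    Finset.forall_mem_map, addLeftEmbedding_apply]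

theorem two_mul_le_degree {s : Set σ} {i₀ i₁ : σ} (hi₀ : i₀ ∈ s) (hi₁ : i₁ ∉ s) {u : ℕ}
    {d : σ →₀ ℕ} (h₀ : u ≤ squareCount s (Finsupp.single i₀ 1 + d))
    (h₁ : u ≤ squareCount s (Finsupp.single i₁ 1 + d)) : 2 * u ≤ d.degree := by
  classical
  simp only [squareCount, map_add, blockDegree_single, Set.mem_compl_iff, hi₀, hi₁,
    not_true_eq_false, not_false_eq_true, ↓reduceIte] at h₀ h₁
  have := blockDegree_add_blockDegree_compl s d
  omega

theorem degree_le_of_squareCount_lt {s : Set σ} {u : ℕ} {d : σ →₀ ℕ}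
    (h : squareCount s d < u) : d.degree ≤ 2 * u := by
  have := blockDegree_add_blockDegree_compl s d
  simp only [squareCount] at h
  omega

end MvPolynomial

theorem stmt_2_general {K : Type*} [Field K] (m j u : ℕ) (hj1 : 1 ≤ j) (hjm : j < m)
    (hu : 1 ≤ u)
    (J : Ideal (MvPolynomial (Fin m) K))
    (hJ : J = (Ideal.span ((X : Fin m → MvPolynomial (Fin m) K) '' {i | (i : ℕ) < j}) ^ 2 +
        Ideal.span ((X : Fin m → MvPolynomial (Fin m) K) '' {i | j ≤ (i : ℕ)}) ^ 2) ^ u)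
    (mm : Ideal (MvPolynomial (Fin m) K))
    (hmm : mm = Ideal.span (Set.range (X : Fin m → MvPolynomial (Fin m) K))) :
    -- no monomial of degree `2u - 1` lies in `J : mm`
    (∀ d : Fin m →₀ ℕ, (∑ i : Fin m, d i) = 2 * u - 1 →
        (monomial d (1 : K)) ∉ Submodule.colon J mm) ∧
    -- consequently the socle of `A = S/J` is concentrated in degree `2u` ...
    (∀ (p : MvPolynomial (Fin m) K) (k : ℕ), p.IsHomogeneous k →
        p ∈ Submodule.colon J mm → p ∉ J → k = 2 * u) ∧
    -- ... and it is nonzero there, i.e. `A` is a level algebra of socle degree `2u`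
    (∃ p : MvPolynomial (Fin m) K, p.IsHomogeneous (2 * u) ∧
        p ∈ Submodule.colon J mm ∧ p ∉ J) := by
  classical
  set s : Set (Fin m) := {i | (i : ℕ) < j}
  have hcompl : {i : Fin m | j ≤ (i : ℕ)} = sᶜ := by ext; simp [s]
  rw [hcompl] at hJ
  have mem_J (p) : p ∈ J ↔ ∀ d ∈ p.support, u ≤ squareCount s d :=
    hJ ▸ mem_span_X_sq_add_span_X_compl_sq_pow_iff
  have mem_colon (p) : p ∈ J.colon mm ↔
      ∀ i, ∀ d ∈ p.support, u ≤ squareCount s (Finsupp.single i 1 + d) := by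
    subst hJ hmm
    exact mem_colon_idealOfVars_iff_squareCount
  have hi₀ : (⟨0, by omega⟩ : Fin m) ∈ s := hj1
  have hi₁ : (⟨j, hjm⟩ : Fin m) ∉ s := lt_irrefl j
  have socle_degree {p} (hp : p ∈ J.colon mm) {d} (hd : d ∈ p.support) : 2 * u ≤ d.degree :=
    two_mul_le_degree hi₀ hi₁ ((mem_colon p).mp hp _ d hd) ((mem_colon p).mp hp _ d hd)
  refine ⟨fun d hd hdJ => ?_, fun p k hp hpJ hp' => ?_, ?_⟩
  · have := socle_degree hdJ (by simp : d ∈ (monomial d (1 : K)).support)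
    rw [Finsupp.degree_eq_sum] at this
    omega
  · obtain ⟨d, hd, hlt⟩ : ∃ d ∈ p.support, squareCount s d < u := by simpa [mem_J] using hp'
    rw [← hp (mem_support_iff.mp hd), Pi.one_def, ← Finsupp.degree_eq_weight_one]
    exact le_antisymm (degree_le_of_squareCount_lt hlt) (socle_degree hpJ hd)
  · set d₀ := Finsupp.single (⟨0, by omega⟩ : Fin m) 1 + Finsupp.single ⟨j, hjm⟩ (2 * u - 1)
    obtain ⟨hA, hB⟩ : blockDegree s d₀ = 1 ∧ blockDegree sᶜ d₀ = 2 * u - 1 :=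
      blockDegree_single_add_single hi₀ hi₁ 1 (2 * u - 1)
    refine ⟨monomial d₀ 1, isHomogeneous_monomial _ ?_, (mem_colon _).mpr ?_, fun h => ?_⟩
    · rw [← blockDegree_add_blockDegree_compl s, hA, hB]
      omega
    · intro i d hd
      rw [support_monomial, if_neg one_ne_zero, Finset.mem_singleton] at hd
      subst hd
      by_cases hi : i ∈ s <;>
        simp only [squareCount, map_add, blockDegree_single, Set.mem_compl_iff, hi, hA, hB,
          not_true_eq_false, not_false_eq_true, ↓reduceIte] <;> omega
    · have := (mem_J _).mp h d₀ (by simp)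
      simp only [squareCount, hA, hB] at this
      omega

theorem stmt_2 {K : Type*} [Field K] (m j u : ℕ) (hm : 3 ≤ m) (hj1 : 1 ≤ j) (hjm : j < m)
    (hu : 1 ≤ u)
    (J : Ideal (MvPolynomial (Fin m) K))
    (hJ : J = (Ideal.span ((X : Fin m → MvPolynomial (Fin m) K) '' {i | (i : ℕ) < j}) ^ 2 +
        Ideal.span ((X : Fin m → MvPolynomial (Fin m) K) '' {i | j ≤ (i : ℕ)}) ^ 2) ^ u)
    (mm : Ideal (MvPolynomial (Fin m) K))
    (hmm : mm = Ideal.span (Set.range (X : Fin m → MvPolynomial (Fin m) K))) :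
    -- no monomial of degree `2u - 1` lies in `J : mm`
    (∀ d : Fin m →₀ ℕ, (∑ i : Fin m, d i) = 2 * u - 1 →
        (monomial d (1 : K)) ∉ Submodule.colon J mm) ∧
    -- consequently the socle of `A = S/J` is concentrated in degree `2u` ...
    (∀ (p : MvPolynomial (Fin m) K) (k : ℕ), p.IsHomogeneous k →
        p ∈ Submodule.colon J mm → p ∉ J → k = 2 * u) ∧
    -- ... and it is nonzero there, i.e. `A` is a level algebra of socle degree `2u`
    (∃ p : MvPolynomial (Fin m) K, p.IsHomogeneous (2 * u) ∧
        p ∈ Submodule.colon J mm ∧ p ∉ J) :=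
  stmt_2_general m j u hj1 hjm hu J hJ mm hmm
end

section
/- For all integers t ≥ 2 and m ≥ 3 there exists a monomial ideal J ⊆ S = K[x_1,...,x_m] generated in the single degree t such that A = S/J is an Artinian level algebra of socle degree t. -/
open MvPolynomial

/-- The arithmetic membership rule: for an exponent vector of total degree `t`
with `a` the exponent of `x₀`, `b` the exponent of `x₁` (so the rest has degree
`t - a - b`), the monomial is a generator iff:
if the rest is zero then (`a` even or `b = 0`), else (`a` odd or (`a = 0` and `b` even)). -/
def stmt3P (t a b : ℕ) : Prop :=
  (a + b = t → (a % 2 = 0 ∨ b = 0)) ∧ (a + b ≠ t → (a % 2 = 1 ∨ (a = 0 ∧ b % 2 = 0)))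

/-- Exponent vectors of the generators. -/
def stmt3Good {m : ℕ} (t : ℕ) (i0 i1 : Fin m) (d : Fin m →₀ ℕ) : Prop :=
  (∑ i, d i) = t ∧ stmt3P t (d i0) (d i1)

lemma stmt3_sum_add_single {m : ℕ} (f : Fin m →₀ ℕ) (j : Fin m) (c : ℕ) :
    (∑ i, (f + Finsupp.single j c) i) = (∑ i, f i) + c := by
  simp [Finsupp.add_apply, Finsupp.single_apply, Finset.sum_add_distrib]

lemma stmt3_sum_single {m : ℕ} (j : Fin m) (c : ℕ) :
    (∑ i, (Finsupp.single j c : Fin m →₀ ℕ) i) = c := by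
  simp [Finsupp.single_apply]

lemma stmt3_pair {m : ℕ} {i0 i1 : Fin m} (h01 : i0 ≠ i1) (e : Fin m →₀ ℕ) :
    e i0 + e i1 ≤ ∑ i, e i ∧
      (e i0 + e i1 < ∑ i, e i → ∃ j, j ≠ i0 ∧ j ≠ i1 ∧ 1 ≤ e j) := by
  have hsd := Finset.sum_sdiff (f := e) (Finset.subset_univ {i0, i1})
  rw [Finset.sum_pair h01] at hsd
  constructor
  · omega
  · intro hlt
    have hne : ∑ x ∈ Finset.univ \ {i0, i1}, e x ≠ 0 := by omega
    obtain ⟨j, hj, hej⟩ := Finset.exists_ne_zero_of_sum_ne_zero hne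
    simp only [Finset.mem_sdiff, Finset.mem_univ, Finset.mem_insert,
      Finset.mem_singleton, true_and] at hj
    exact ⟨j, by tauto, by tauto, by omega⟩

lemma stmt3_sum_mono {m : ℕ} {d e : Fin m →₀ ℕ} (h : d ≤ e) :
    (∑ i, d i) ≤ ∑ i, e i :=
  Finset.sum_le_sum fun i _ => Finsupp.le_def.mp h i

lemma stmt3_eq_of_le {m : ℕ} {d e : Fin m →₀ ℕ} (h : d ≤ e)
    (hs : (∑ i, d i) = ∑ i, e i) : d = e := by
  ext i
  exact (Finset.sum_eq_sum_iff_of_le fun i _ => Finsupp.le_def.mp h i).mp hs i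
    (Finset.mem_univ i)

lemma stmt3_sub {m : ℕ} (e : Fin m →₀ ℕ) (j : Fin m) (hj : 1 ≤ e j) :
    ∃ d : Fin m →₀ ℕ, d ≤ e ∧ (∑ i, d i) + 1 = ∑ i, e i ∧
      ∀ i, d i + (if j = i then 1 else 0) = e i := by
  have hle : Finsupp.single j 1 ≤ e := Finsupp.single_le_iff.mpr hj
  have hco : e - Finsupp.single j 1 + Finsupp.single j 1 = e := tsub_add_cancel_of_le hle
  refine ⟨e - Finsupp.single j 1, tsub_le_self, ?_, ?_⟩
  · conv_rhs => rw [← hco]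
    rw [stmt3_sum_add_single]
  · intro i
    conv_rhs => rw [← hco]
    rw [Finsupp.add_apply, Finsupp.single_apply]

/-- Combinatorial condition (A): every exponent vector of degree `t+1`
dominates a generator exponent. -/
lemma stmt3_A {m t : ℕ} (ht : 2 ≤ t) {i0 i1 : Fin m} (h01 : i0 ≠ i1)
    (e : Fin m →₀ ℕ) (he : (∑ i, e i) = t + 1) :
    ∃ d, stmt3Good t i0 i1 d ∧ d ≤ e := by
  have hpair := stmt3_pair h01 e
  have hab : e i0 + e i1 ≤ t + 1 := he ▸ hpair.1
  by_cases hr : e i0 + e i1 = t + 1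
  · by_cases hb0 : e i1 = 0
    · obtain ⟨d, hdle, hsum, hcomp⟩ := stmt3_sub e i0 (by omega)
      have h0 := hcomp i0; have h1 := hcomp i1
      rw [if_pos rfl] at h0; rw [if_neg h01] at h1
      exact ⟨d, ⟨by omega, by unfold stmt3P; omega⟩, hdle⟩
    · by_cases ha : e i0 % 2 = 0
      · obtain ⟨d, hdle, hsum, hcomp⟩ := stmt3_sub e i1 (by omega)
        have h0 := hcomp i0; have h1 := hcomp i1
        rw [if_neg (Ne.symm h01)] at h0; rw [if_pos rfl] at h1
        exact ⟨d, ⟨by omega, by unfold stmt3P; omega⟩, hdle⟩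
      · obtain ⟨d, hdle, hsum, hcomp⟩ := stmt3_sub e i0 (by omega)
        have h0 := hcomp i0; have h1 := hcomp i1
        rw [if_pos rfl] at h0; rw [if_neg h01] at h1
        exact ⟨d, ⟨by omega, by unfold stmt3P; omega⟩, hdle⟩
  · -- here e i0 + e i1 ≤ t, so there is a third variable with positive exponent
    obtain ⟨j3, hj30, hj31, hj3⟩ := hpair.2 (by omega)
    by_cases ha0 : e i0 = 0
    · by_cases hbp : e i1 % 2 = 0
      · obtain ⟨d, hdle, hsum, hcomp⟩ := stmt3_sub e j3 hj3
        have h0 := hcomp i0; have h1 := hcomp i1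
        rw [if_neg hj30] at h0; rw [if_neg hj31] at h1
        exact ⟨d, ⟨by omega, by unfold stmt3P; omega⟩, hdle⟩
      · obtain ⟨d, hdle, hsum, hcomp⟩ := stmt3_sub e i1 (by omega)
        have h0 := hcomp i0; have h1 := hcomp i1
        rw [if_neg (Ne.symm h01)] at h0; rw [if_pos rfl] at h1
        exact ⟨d, ⟨by omega, by unfold stmt3P; omega⟩, hdle⟩
    · by_cases ha : e i0 % 2 = 1
      · by_cases hb0 : e i1 = 0
        · obtain ⟨d, hdle, hsum, hcomp⟩ := stmt3_sub e j3 hj3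
          have h0 := hcomp i0; have h1 := hcomp i1
          rw [if_neg hj30] at h0; rw [if_neg hj31] at h1
          exact ⟨d, ⟨by omega, by unfold stmt3P; omega⟩, hdle⟩
        · obtain ⟨d, hdle, hsum, hcomp⟩ := stmt3_sub e i1 (by omega)
          have h0 := hcomp i0; have h1 := hcomp i1
          rw [if_neg (Ne.symm h01)] at h0; rw [if_pos rfl] at h1
          exact ⟨d, ⟨by omega, by unfold stmt3P; omega⟩, hdle⟩
      · -- e i0 even and positive
        obtain ⟨d, hdle, hsum, hcomp⟩ := stmt3_sub e i0 (by omega)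
        have h0 := hcomp i0; have h1 := hcomp i1
        rw [if_pos rfl] at h0; rw [if_neg h01] at h1
        exact ⟨d, ⟨by omega, by unfold stmt3P; omega⟩, hdle⟩

/-- (A) for degrees ≥ t+1. -/
lemma stmt3_Age {m t : ℕ} (ht : 2 ≤ t) {i0 i1 : Fin m} (h01 : i0 ≠ i1)
    (e : Fin m →₀ ℕ) (he : t + 1 ≤ ∑ i, e i) :
    ∃ d, stmt3Good t i0 i1 d ∧ d ≤ e := by
  obtain ⟨n, hn⟩ : ∃ n, (∑ i, e i) = t + 1 + n := ⟨(∑ i, e i) - (t + 1), by omega⟩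
  clear he
  induction n generalizing e with
  | zero => exact stmt3_A ht h01 e (by omega)
  | succ k ih =>
    have hne : (∑ i, e i) ≠ 0 := by omega
    have : ∑ i ∈ Finset.univ, e i ≠ 0 := hne
    obtain ⟨j, _, hej⟩ := Finset.exists_ne_zero_of_sum_ne_zero this
    obtain ⟨d', hd'le, hsum, _⟩ := stmt3_sub e j (by omega)
    obtain ⟨d, hd, hle⟩ := ih d' (by omega)
    exact ⟨d, hd, hle.trans hd'le⟩

/-- Combinatorial condition (B): every vector of degree < t has a neighbour
(one step up) dominating no generator exponent. -/
lemma stmt3_B {m t : ℕ} (ht : 2 ≤ t) {i0 i1 i2 : Fin m}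
    (h01 : i0 ≠ i1) (h02 : i0 ≠ i2) (h12 : i1 ≠ i2)
    (e : Fin m →₀ ℕ) (he : (∑ i, e i) + 1 ≤ t) :
    ∃ j, ∀ d, stmt3Good t i0 i1 d → ¬ d ≤ e + Finsupp.single j 1 := by
  by_cases hlt : (∑ i, e i) + 1 < t
  · refine ⟨i0, fun d hd hle => ?_⟩
    have hmono := stmt3_sum_mono hle
    rw [stmt3_sum_add_single] at hmono
    have := hd.1
    omega
  · have heq : (∑ i, e i) + 1 = t := by omega
    have hval : ∀ j : Fin m, ∀ d, stmt3Good t i0 i1 d →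
        d ≤ e + Finsupp.single j 1 → d = e + Finsupp.single j 1 := by
      intro j d hd hle
      refine stmt3_eq_of_le hle ?_
      rw [stmt3_sum_add_single]
      have := hd.1
      omega
    have happ : ∀ j i : Fin m, ((e + Finsupp.single j 1 : Fin m →₀ ℕ)) i
        = e i + (if j = i then 1 else 0) := by
      intro j i
      rw [Finsupp.add_apply, Finsupp.single_apply]
    have hpair := stmt3_pair h01 e
    have hab : e i0 + e i1 ≤ ∑ i, e i := hpair.1
    -- helper to conclude from a chosen j
    have main : ∀ j : Fin m, ¬ stmt3P t ((e + Finsupp.single j 1 : Fin m →₀ ℕ) i0)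
          ((e + Finsupp.single j 1 : Fin m →₀ ℕ) i1) →
        ∀ d, stmt3Good t i0 i1 d → ¬ d ≤ e + Finsupp.single j 1 := by
      intro j hnP d hd hle
      have hdv := hval j d hd hle
      have hP := hd.2
      rw [hdv] at hP
      exact hnP hP
    by_cases hr : e i0 + e i1 = ∑ i, e i
    · by_cases ha : e i0 % 2 = 1
      · refine ⟨i1, main i1 ?_⟩
        have h0 := happ i1 i0; have h1 := happ i1 i1
        rw [if_neg (Ne.symm h01)] at h0; rw [if_pos rfl] at h1
        unfold stmt3P; omega
      · by_cases ha0 : e i0 = 0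
        · by_cases hbp : e i1 % 2 = 1
          · refine ⟨i2, main i2 ?_⟩
            have h0 := happ i2 i0; have h1 := happ i2 i1
            rw [if_neg (Ne.symm h02)] at h0; rw [if_neg (Ne.symm h12)] at h1
            unfold stmt3P; omega
          · refine ⟨i0, main i0 ?_⟩
            have h0 := happ i0 i0; have h1 := happ i0 i1
            rw [if_pos rfl] at h0; rw [if_neg h01] at h1
            unfold stmt3P; omega
        · refine ⟨i2, main i2 ?_⟩
          have h0 := happ i2 i0; have h1 := happ i2 i1
          rw [if_neg (Ne.symm h02)] at h0; rw [if_neg (Ne.symm h12)] at h1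
          unfold stmt3P; omega
    · by_cases ha : e i0 % 2 = 1
      · refine ⟨i0, main i0 ?_⟩
        have h0 := happ i0 i0; have h1 := happ i0 i1
        rw [if_pos rfl] at h0; rw [if_neg h01] at h1
        unfold stmt3P; omega
      · by_cases ha0 : e i0 = 0
        · by_cases hbp : e i1 % 2 = 0
          · refine ⟨i1, main i1 ?_⟩
            have h0 := happ i1 i0; have h1 := happ i1 i1
            rw [if_neg (Ne.symm h01)] at h0; rw [if_pos rfl] at h1
            unfold stmt3P; omega
          · refine ⟨i2, main i2 ?_⟩
            have h0 := happ i2 i0; have h1 := happ i2 i1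
            rw [if_neg (Ne.symm h02)] at h0; rw [if_neg (Ne.symm h12)] at h1
            unfold stmt3P; omega
        · refine ⟨i2, main i2 ?_⟩
          have h0 := happ i2 i0; have h1 := happ i2 i1
          rw [if_neg (Ne.symm h02)] at h0; rw [if_neg (Ne.symm h12)] at h1
          unfold stmt3P; omega

section algebra

variable {K : Type*} [Field K] {m t : ℕ} (i0 i1 : Fin m)

/-- The generating set: monomials with `stmt3Good` exponents. -/
def stmt3G (K : Type*) [Field K] (t : ℕ) (i0 i1 : Fin m) :
    Set (MvPolynomial (Fin m) K) :=
  {g | ∃ d : Fin m →₀ ℕ, stmt3Good t i0 i1 d ∧ g = monomial d 1}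

lemma stmt3_memJ_of_div (e : Fin m →₀ ℕ) (c : K)
    (h : ∃ d, stmt3Good t i0 i1 d ∧ d ≤ e) :
    monomial e c ∈ Ideal.span (stmt3G K t i0 i1) := by
  obtain ⟨d, hd, hle⟩ := h
  have : monomial e c = monomial d (1 : K) * monomial (e - d) c := by
    rw [monomial_mul, one_mul, add_tsub_cancel_of_le hle]
  rw [this]
  exact Ideal.mul_mem_right _ _ (Ideal.subset_span ⟨d, hd, rfl⟩)

lemma stmt3_div_of_memJ {p : MvPolynomial (Fin m) K}
    (hp : p ∈ Ideal.span (stmt3G K t i0 i1)) :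
    ∀ e ∈ p.support, ∃ d, stmt3Good t i0 i1 d ∧ d ≤ e := by
  induction hp using Submodule.span_induction with
  | mem x hx =>
    classical
    obtain ⟨d, hd, rfl⟩ := hx
    intro e he
    rw [MvPolynomial.support_monomial, if_neg (one_ne_zero)] at he
    rw [Finset.mem_singleton] at he
    exact ⟨d, hd, he ▸ le_rfl⟩
  | zero => intro e he; simp at he
  | add x y hx hy ihx ihy =>
    intro e he
    rcases Finset.mem_union.mp (MvPolynomial.support_add he) with h | h
    · exact ihx e h
    · exact ihy e h
  | smul a x hx ih =>
    intro e he
    rw [smul_eq_mul] at he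
    obtain ⟨u, hu, v, hv, rfl⟩ := Finset.mem_add.mp (MvPolynomial.support_mul a x he)
    obtain ⟨d, hd, hdv⟩ := ih v hv
    exact ⟨d, hd, hdv.trans le_add_self⟩

lemma stmt3_memJ_of_forall {p : MvPolynomial (Fin m) K}
    (h : ∀ e ∈ p.support, ∃ d, stmt3Good t i0 i1 d ∧ d ≤ e) :
    p ∈ Ideal.span (stmt3G K t i0 i1) := by
  rw [← MvPolynomial.support_sum_monomial_coeff p]
  exact Ideal.sum_mem _ fun e he => stmt3_memJ_of_div i0 i1 e _ (h e he)

end algebra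

theorem stmt_3 {K : Type*} [Field K] (t m : ℕ) (ht : 2 ≤ t) (hm : 3 ≤ m) :
    ∃ J : Ideal (MvPolynomial (Fin m) K),
      -- `J` is a monomial ideal generated in the single degree `t`
      (∃ G : Set (MvPolynomial (Fin m) K), J = Ideal.span G ∧
        ∀ g ∈ G, ∃ d : Fin m →₀ ℕ, g = monomial d 1 ∧ (∑ i : Fin m, d i) = t) ∧
      -- `A = S/J` is Artinian: a power of the maximal ideal is contained in `J`
      (Ideal.span (Set.range (X : Fin m → MvPolynomial (Fin m) K))) ^ (t + 1) ≤ J ∧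
      -- the socle of `A` is concentrated in degree `t` ...
      (∀ (p : MvPolynomial (Fin m) K) (k : ℕ), p.IsHomogeneous k →
        p ∈ Submodule.colon J (Ideal.span (Set.range (X : Fin m → MvPolynomial (Fin m) K))) →
        p ∉ J → k = t) ∧
      -- ... and is nonzero there, so `A` is level of socle degree `t`
      (∃ p : MvPolynomial (Fin m) K, p.IsHomogeneous t ∧
        p ∈ Submodule.colon J (Ideal.span (Set.range (X : Fin m → MvPolynomial (Fin m) K))) ∧
        p ∉ J) := by
  have h0m : 0 < m := by omega
  have h1m : 1 < m := by omega
  have h2m : 2 < m := by omega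
  set i0 : Fin m := ⟨0, h0m⟩
  set i1 : Fin m := ⟨1, h1m⟩
  set i2 : Fin m := ⟨2, h2m⟩
  have h01 : i0 ≠ i1 := by simp [i0, i1, Fin.ext_iff]
  have h02 : i0 ≠ i2 := by simp [i0, i2, Fin.ext_iff]
  have h12 : i1 ≠ i2 := by simp [i1, i2, Fin.ext_iff]
  -- degree of a finsupp as a sum over `univ`
  have hdeg_eq : ∀ e : Fin m →₀ ℕ, e.degree = ∑ i, e i := by
    intro e
    exact Finset.sum_subset (Finset.subset_univ _)
      (fun i _ hi => Finsupp.notMem_support_iff.mp hi)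
  refine ⟨Ideal.span (stmt3G K t i0 i1), ⟨stmt3G K t i0 i1, rfl, ?_⟩, ?_, ?_, ?_⟩
  · rintro g ⟨d, hd, rfl⟩
    exact ⟨d, rfl, hd.1⟩
  · -- Artinian: the (t+1)-st power of the irrelevant ideal lies in J
    have hMo : ∀ n : ℕ,
        (Ideal.span (Set.range (X : Fin m → MvPolynomial (Fin m) K))) ^ n ≤
          Ideal.span {g | ∃ e : Fin m →₀ ℕ, (∑ i, e i) = n ∧ g = monomial e (1 : K)} := by
      intro n
      induction n with
      | zero =>
        rw [pow_zero, Ideal.one_eq_top, top_le_iff]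
        refine (Ideal.eq_top_iff_one _).mpr ?_
        refine Ideal.subset_span ⟨0, by simp, ?_⟩
        simp [MvPolynomial.monomial_zero']
      | succ n ihn =>
        rw [pow_succ]
        have hX1 : (Ideal.span (Set.range (X : Fin m → MvPolynomial (Fin m) K))) ≤
            Ideal.span {g | ∃ e : Fin m →₀ ℕ, (∑ i, e i) = 1 ∧ g = monomial e (1 : K)} := by
          rw [Ideal.span_le]
          rintro g ⟨i, rfl⟩
          exact Ideal.subset_span ⟨Finsupp.single i 1, stmt3_sum_single i 1, rfl⟩
        refine le_trans (Ideal.mul_mono ihn hX1) ?_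
        rw [Ideal.span_mul_span, Ideal.span_le]
        rintro g hg
        rw [Set.mem_mul] at hg
        obtain ⟨u, ⟨e, he, rfl⟩, v, ⟨f, hf, rfl⟩, rfl⟩ := hg
        refine Ideal.subset_span ⟨e + f, ?_, ?_⟩
        · rw [show (∑ i, (e + f) i) = (∑ i, e i) + (∑ i, f i) by
            simp [Finsupp.add_apply, Finset.sum_add_distrib]]
          omega
        · rw [monomial_mul, one_mul]
    refine le_trans (hMo (t + 1)) ?_
    rw [Ideal.span_le]
    rintro g ⟨e, he, rfl⟩
    exact stmt3_memJ_of_div i0 i1 e 1 (stmt3_A ht h01 e he)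
  · -- socle concentrated in degree t
    intro p k hhom hcol hnot
    have hsupp : ∃ e ∈ p.support, ∀ d, stmt3Good t i0 i1 d → ¬ d ≤ e := by
      by_contra hcon
      push_neg at hcon
      refine hnot (stmt3_memJ_of_forall i0 i1 ?_)
      intro e he
      obtain ⟨d, hd, hdd⟩ := hcon e he
      exact ⟨d, hd, hdd⟩
    obtain ⟨e, he, hnd⟩ := hsupp
    have hdeg : (∑ i, e i) = k := by
      by_contra hne
      exact (MvPolynomial.mem_support_iff.mp he)
        (hhom.coeff_eq_zero (by rw [hdeg_eq]; exact hne))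
    rcases lt_trichotomy k t with hk | hk | hk
    · exfalso
      obtain ⟨j, hj⟩ := stmt3_B ht h01 h02 h12 e (by omega)
      have hXp : p * X j ∈ Ideal.span (stmt3G K t i0 i1) := by
        have := Submodule.mem_colon.mp hcol (X j)
          (Ideal.subset_span ⟨j, rfl⟩)
        rwa [smul_eq_mul] at this
      have hmem : e + Finsupp.single j 1 ∈ (p * X j).support := by
        rw [MvPolynomial.mem_support_iff, MvPolynomial.coeff_mul_X]
        exact MvPolynomial.mem_support_iff.mp he
      obtain ⟨d, hd, hle⟩ := stmt3_div_of_memJ i0 i1 hXp _ hmem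
      exact hj d hd hle
    · exact hk
    · exfalso
      obtain ⟨d, hd, hle⟩ := stmt3_Age ht h01 e (by omega)
      exact hnd d hd hle
  · -- nonzero socle element in degree t
    set estar : Fin m →₀ ℕ := Finsupp.single i0 1 + Finsupp.single i1 (t - 1) with hestar
    have hsum : (∑ i, estar i) = t := by
      rw [hestar, stmt3_sum_add_single, stmt3_sum_single]
      omega
    have he0 : estar i0 = 1 := by
      rw [hestar, Finsupp.add_apply, Finsupp.single_apply, Finsupp.single_apply,
        if_pos rfl, if_neg (Ne.symm h01)]
      omega
    have he1 : estar i1 = t - 1 := by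
      rw [hestar, Finsupp.add_apply, Finsupp.single_apply, Finsupp.single_apply,
        if_neg h01, if_pos rfl]
      omega
    refine ⟨monomial estar 1, ?_, ?_, ?_⟩
    · exact isHomogeneous_monomial 1 (by rw [hdeg_eq]; exact hsum)
    · rw [Submodule.mem_colon]
      intro x hx
      induction hx using Submodule.span_induction with
      | mem y hy =>
        obtain ⟨i, rfl⟩ := hy
        rw [smul_eq_mul, show (X i : MvPolynomial (Fin m) K) = monomial (Finsupp.single i 1) 1
          from rfl, monomial_mul, one_mul]
        refine stmt3_memJ_of_div i0 i1 _ 1 (stmt3_A ht h01 _ ?_)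
        rw [stmt3_sum_add_single]
        omega
      | zero => rw [smul_zero]; exact Ideal.zero_mem _
      | add y z hy hz ihy ihz => rw [smul_add]; exact Ideal.add_mem _ ihy ihz
      | smul a y hy ih =>
        rw [smul_comm]
        exact Submodule.smul_mem _ a ih
    · intro hmem
      have hsuppe : estar ∈ (monomial estar (1 : K)).support := by
        rw [MvPolynomial.mem_support_iff, MvPolynomial.coeff_monomial, if_pos rfl]
        exact one_ne_zero
      obtain ⟨d, hd, hle⟩ := stmt3_div_of_memJ i0 i1 hmem _ hsuppe
      have hdeq : d = estar := stmt3_eq_of_le hle (by rw [hsum]; exact hd.1)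
      have hP := hd.2
      rw [hdeq, he0, he1] at hP
      unfold stmt3P at hP
      omega
end

section
/- Let S = K[x_1,...,x_m] with m ≥ 3, let 1 ≤ j < k ≤ m, set X = (x_1,...,x_j), Y = (x_{j+1},...,x_k), Z = (x_{k+1},...,x_m), and for u ≥ 1 let J = X(X²+Y²)^u + Y(Y²+Z²)^u + Z(Z²+X²)^u + XYZ((X+Y)²+Z²)^{u−1}. Then m^{2u+2} ⊆ J, where m = X + Y + Z. -/
open MvPolynomial

section Aux
variable {R : Type*} [CommRing R]

private lemma natCast_ideal (c : ℕ) (hc : 1 ≤ c) : (c : Ideal R) = 1 := by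
  induction c with
  | zero => omega
  | succ n ih =>
    rcases Nat.eq_zero_or_pos n with h | h
    · simp [h]
    · push_cast
      rw [ih h, Submodule.add_eq_sup, sup_idem]

private lemma sum_le_ideal {ι : Type*} {s : Finset ι} {f : ι → Ideal R} {J : Ideal R}
    (h : ∀ i ∈ s, f i ≤ J) : (∑ i ∈ s, f i) ≤ J := by
  classical
  induction s using Finset.induction with
  | empty => simp
  | insert a s hx ih =>
    rw [Finset.sum_insert hx, Submodule.add_eq_sup]
    exact sup_le (h _ (Finset.mem_insert_self _ _)) (ih fun i hi => h i (Finset.mem_insert_of_mem hi))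

private lemma two_var (A B : Ideal R) {p q v : ℕ} (h : 2*v+1 ≤ p+q) :
    A^p * B^q ≤ (A^2+B^2)^v := by
  have h1 : A^p ≤ (A^2+B^2)^(p/2) := by
    calc A^p ≤ A^(2*(p/2)) := Ideal.pow_le_pow_right (by omega)
    _ = (A^2)^(p/2) := by rw [pow_mul]
    _ ≤ (A^2+B^2)^(p/2) := Ideal.pow_right_mono le_self_add _
  have h2 : B^q ≤ (A^2+B^2)^(q/2) := by
    calc B^q ≤ B^(2*(q/2)) := Ideal.pow_le_pow_right (by omega)
    _ = (B^2)^(q/2) := by rw [pow_mul]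
    _ ≤ (A^2+B^2)^(q/2) := Ideal.pow_right_mono (by rw [add_comm]; exact le_self_add) _
  calc A^p * B^q ≤ (A^2+B^2)^(p/2) * (A^2+B^2)^(q/2) := Ideal.mul_mono h1 h2
  _ = (A^2+B^2)^(p/2+q/2) := by rw [pow_add]
  _ ≤ (A^2+B^2)^v := Ideal.pow_le_pow_right (by omega)

private lemma mono_le (A B C : Ideal R) (u a b c : ℕ) (hu : 1 ≤ u) (h : a+b+c = 2*u+2) :
    A^a * B^b * C^c ≤ A*(A^2+B^2)^u + B*(B^2+C^2)^u + C*(C^2+A^2)^u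
      + A*B*C*((A+B)^2+C^2)^(u-1) := by
  simp only [Submodule.add_eq_sup]
  rcases Nat.eq_zero_or_pos a with ha | ha
  · -- a = 0
    rcases Nat.eq_zero_or_pos b with hb | hb
    · -- monomial = C^c, c = 2u+2 ≥ 1, use term 3
      subst ha; subst hb
      refine le_trans ?_ (le_sup_of_le_left le_sup_right)
      obtain ⟨c', rfl⟩ : ∃ c', c = c' + 1 := ⟨c-1, by omega⟩
      calc A^0 * B^0 * C^(c'+1) = C * (C^c' * A^0) := by ring
      _ ≤ C * (C^2+A^2)^u := Ideal.mul_mono le_rfl (two_var _ _ (by omega))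
    · -- b ≥ 1, use term 2
      subst ha
      refine le_trans ?_ (le_sup_of_le_left (le_sup_of_le_left le_sup_right))
      obtain ⟨b', rfl⟩ : ∃ b', b = b' + 1 := ⟨b-1, by omega⟩
      calc A^0 * B^(b'+1) * C^c = B * (B^b' * C^c) := by ring
      _ ≤ B * (B^2+C^2)^u := Ideal.mul_mono le_rfl (two_var _ _ (by omega))
  · rcases Nat.eq_zero_or_pos c with hc | hc
    · -- c = 0, a ≥ 1, use term 1
      subst hc
      refine le_trans ?_ (le_sup_of_le_left (le_sup_of_le_left le_sup_left))
      obtain ⟨a', rfl⟩ : ∃ a', a = a' + 1 := ⟨a-1, by omega⟩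
      calc A^(a'+1) * B^b * C^0 = A * (A^a' * B^b) := by ring
      _ ≤ A * (A^2+B^2)^u := Ideal.mul_mono le_rfl (two_var _ _ (by omega))
    · rcases Nat.eq_zero_or_pos b with hb | hb
      · -- b = 0, c ≥ 1, use term 3
        subst hb
        refine le_trans ?_ (le_sup_of_le_left le_sup_right)
        obtain ⟨c', rfl⟩ : ∃ c', c = c' + 1 := ⟨c-1, by omega⟩
        calc A^a * B^0 * C^(c'+1) = C * (C^c' * A^a) := by ring
        _ ≤ C * (C^2+A^2)^u := Ideal.mul_mono le_rfl (two_var _ _ (by omega))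
      · -- a,b,c ≥ 1, use term 4
        refine le_trans ?_ le_sup_right
        obtain ⟨a', rfl⟩ : ∃ a', a = a' + 1 := ⟨a-1, by omega⟩
        obtain ⟨b', rfl⟩ : ∃ b', b = b' + 1 := ⟨b-1, by omega⟩
        obtain ⟨c', rfl⟩ : ∃ c', c = c' + 1 := ⟨c-1, by omega⟩
        have hab : A^a' * B^b' ≤ (A+B)^(a'+b') := by
          rw [pow_add]
          exact Ideal.mul_mono (Ideal.pow_right_mono le_self_add _)
            (Ideal.pow_right_mono (by rw [add_comm]; exact le_self_add) _)
        calc A^(a'+1) * B^(b'+1) * C^(c'+1) = A*B*C * (A^a' * B^b' * C^c') := by ring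
        _ ≤ A*B*C * ((A+B)^(a'+b') * C^c') :=
            Ideal.mul_mono le_rfl (Ideal.mul_mono hab le_rfl)
        _ ≤ A*B*C * ((A+B)^2+C^2)^(u-1) :=
            Ideal.mul_mono le_rfl (two_var _ _ (by omega))

private lemma key (A B C : Ideal R) (u : ℕ) (hu : 1 ≤ u) :
    (A+B+C)^(2*u+2) ≤ A*(A^2+B^2)^u + B*(B^2+C^2)^u + C*(C^2+A^2)^u
      + A*B*C*((A+B)^2+C^2)^(u-1) := by
  set n := 2*u+2 with hn
  rw [add_pow]
  refine sum_le_ideal fun i hi => ?_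
  rw [Finset.mem_range] at hi
  rw [natCast_ideal _ (Nat.choose_pos (by omega)), mul_one]
  rw [add_pow, Finset.sum_mul]
  refine sum_le_ideal fun l hl => ?_
  rw [Finset.mem_range] at hl
  rw [natCast_ideal _ (Nat.choose_pos (by omega)), mul_one]
  exact mono_le A B C u l (i-l) (n-i) hu (by omega)

end Aux

theorem stmt_4 {K : Type*} [Field K] (m j k u : ℕ) (hm : 3 ≤ m) (hj : 1 ≤ j) (hjk : j < k)
    (hkm : k ≤ m) (hu : 1 ≤ u)
    (XI YI ZI : Ideal (MvPolynomial (Fin m) K))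
    (hXI : XI = Ideal.span ((X : Fin m → MvPolynomial (Fin m) K) '' {i | (i : ℕ) < j}))
    (hYI : YI = Ideal.span ((X : Fin m → MvPolynomial (Fin m) K) '' {i | j ≤ (i : ℕ) ∧ (i : ℕ) < k}))
    (hZI : ZI = Ideal.span ((X : Fin m → MvPolynomial (Fin m) K) '' {i | k ≤ (i : ℕ)})) :
    (Ideal.span (Set.range (X : Fin m → MvPolynomial (Fin m) K))) ^ (2 * u + 2) ≤
      XI * (XI ^ 2 + YI ^ 2) ^ u + YI * (YI ^ 2 + ZI ^ 2) ^ u + ZI * (ZI ^ 2 + XI ^ 2) ^ u +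
        XI * YI * ZI * ((XI + YI) ^ 2 + ZI ^ 2) ^ (u - 1) := by
  have hsets : ({i | (i : ℕ) < j} ∪ {i | j ≤ (i : ℕ) ∧ (i : ℕ) < k} ∪ {i | k ≤ (i : ℕ)}
      : Set (Fin m)) = Set.univ := by
    ext i
    simp only [Set.mem_union, Set.mem_setOf_eq, Set.mem_univ, iff_true]
    omega
  have hrange : Set.range (X : Fin m → MvPolynomial (Fin m) K) =
      ((X : Fin m → MvPolynomial (Fin m) K) '' {i | (i : ℕ) < j})
      ∪ ((X : Fin m → MvPolynomial (Fin m) K) '' {i | j ≤ (i : ℕ) ∧ (i : ℕ) < k})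
      ∪ ((X : Fin m → MvPolynomial (Fin m) K) '' {i | k ≤ (i : ℕ)}) := by
    rw [← Set.image_union, ← Set.image_union, hsets, Set.image_univ]
  have hspan : Ideal.span (Set.range (X : Fin m → MvPolynomial (Fin m) K)) = XI + YI + ZI := by
    rw [hrange, Ideal.span_union, Ideal.span_union, hXI, hYI, hZI,
      Submodule.add_eq_sup, Submodule.add_eq_sup]
  rw [hspan]
  exact key XI YI ZI u hu
end

section
/- Let t ≥ 2 and suppose a sequence of polynomials β_i(v) ∈ ℤ_{≥0}[v] satisfies β_0 = 1, β_1 = nv, β_i = C(n,i)v^i + Σ_{j=1}^{i−1} β_{i−j−1}·a_j·v^{t+j−1} for 2 ≤ i ≤ n, β_{n+2} = Σ_{j=1}^{n−1} β_{n−j+1}·a_j·v^{t+j−1} + v^{n+s}, and β_i = Σ_{j=1}^{n−1} β_{i−j−1}·a_j·v^{t+j−1} otherwise, where a_j ∈ ℤ_{≥0}, n ≥ 2, t ≥ 3, and s ≤ 2t−1 with n+s ≤ (t−1)(n+1)−1. Then deg β_i ≤ (t−1)(i−1)+1 for all i ≥ 1. -/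
open Polynomial

private lemma arith0' (u j : ℕ) (hu : 1 ≤ u) (hj : 1 ≤ j) : u + j ≤ u * j + 1 := by
  obtain ⟨j', rfl⟩ := Nat.exists_eq_add_of_le hj
  have h : j' ≤ u * j' := Nat.le_mul_of_pos_left j' (by omega)
  have e : u * (1 + j') = u + u * j' := by ring
  rw [e]
  omega

private lemma arith1' (u k j : ℕ) (hu : 1 ≤ u) (hj : 1 ≤ j) (hk : 1 ≤ k) :
    u * (k - 1) + 1 + (u + j) ≤ u * (k + j) + 1 := by
  obtain ⟨k', rfl⟩ := Nat.exists_eq_add_of_le hk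
  have e1 : 1 + k' - 1 = k' := by omega
  rw [e1]
  have h : j ≤ u * j := Nat.le_mul_of_pos_left j (by omega)
  have e2 : u * (1 + k' + j) = u * k' + u * j + u := by ring
  rw [e2]
  omega

private lemma termBound' (p : Polynomial ℕ) (c e m : ℕ) (hp : p.degree ≤ (m : WithBot ℕ)) :
    (p * Polynomial.C c * Polynomial.X ^ e).degree ≤ ((m + e : ℕ) : WithBot ℕ) := by
  calc (p * Polynomial.C c * Polynomial.X ^ e).degree
      ≤ (p * Polynomial.C c).degree + (Polynomial.X ^ e : Polynomial ℕ).degree :=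
        degree_mul_le _ _
    _ ≤ (p.degree + (Polynomial.C c : Polynomial ℕ).degree) + (e : WithBot ℕ) := by
        rw [degree_X_pow]
        exact add_le_add_left (degree_mul_le _ _) _
    _ ≤ ((m : WithBot ℕ) + 0) + (e : WithBot ℕ) :=
        add_le_add_left (add_le_add hp degree_C_le) _
    _ = ((m + e : ℕ) : WithBot ℕ) := by rw [add_zero]; push_cast; rfl

/-- Degree-bound induction for the coefficients `β_i(v) ∈ ℤ_{≥0}[v]` of the bigraded
Poincaré series of `K` over a compressed Gorenstein algebra whose defining ideal is
generated in degree `t` (no generators in degree `t+1`).  Given the recursion of the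
paper and the numerical hypotheses `n ≥ 2`, `t ≥ 3` (and `t ≥ 2`), `s ≤ 2t-1`,
`n + s ≤ (t-1)(n+1) - 1`, one has `deg β_i ≤ (t-1)(i-1) + 1` for all `i ≥ 1`
(with `deg 0 = -∞`, i.e. `Polynomial.degree`). -/
theorem stmt_15 (n s t : ℕ) (hn : 2 ≤ n) (ht2 : 2 ≤ t) (ht : 3 ≤ t) (hs : s ≤ 2 * t - 1)
    (hns : n + s ≤ (t - 1) * (n + 1) - 1)
    (a : ℕ → ℕ) (β : ℕ → Polynomial ℕ)
    (hβ0 : β 0 = 1)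
    (hβ1 : β 1 = Polynomial.C n * Polynomial.X)
    (hβmid : ∀ i, 2 ≤ i → i ≤ n →
      β i = Polynomial.C (Nat.choose n i) * Polynomial.X ^ i +
        ∑ j ∈ Finset.Icc 1 (i - 1),
          β (i - j - 1) * Polynomial.C (a j) * Polynomial.X ^ (t + j - 1))
    (hβn2 : β (n + 2) =
      (∑ j ∈ Finset.Icc 1 (n - 1),
          β (n - j + 1) * Polynomial.C (a j) * Polynomial.X ^ (t + j - 1)) +
        Polynomial.X ^ (n + s))
    (hβoth : ∀ i, i = n + 1 ∨ n + 3 ≤ i →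
      β i = ∑ j ∈ Finset.Icc 1 (n - 1),
          β (i - j - 1) * Polynomial.C (a j) * Polynomial.X ^ (t + j - 1)) :
    ∀ i, 1 ≤ i → (β i).degree ≤ (((t - 1) * (i - 1) + 1 : ℕ) : WithBot ℕ) := by
  intro i
  induction i using Nat.strong_induction_on with
  | _ i ih =>
  intro hi
  have hu : 1 ≤ t - 1 := by omega
  -- key bound for a single term of the sums
  have key : ∀ j k : ℕ, 1 ≤ j → k < i → k + j + 1 = i →
      (β k * Polynomial.C (a j) * Polynomial.X ^ (t + j - 1)).degree ≤
        (((t - 1) * (i - 1) + 1 : ℕ) : WithBot ℕ) := by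
    intro j k hj hk hkj
    rcases Nat.eq_zero_or_pos k with rfl | hk1
    · rw [hβ0]
      refine (termBound' 1 (a j) (t + j - 1) 0 (by simpa using degree_one_le)).trans ?_
      rw [Nat.cast_le]
      have e1 : t + j - 1 = (t - 1) + j := by omega
      have e2 : i - 1 = j := by omega
      rw [e1, e2]
      have := arith0' (t - 1) j hu hj
      omega
    · have hIH := ih k hk hk1
      refine (termBound' (β k) (a j) (t + j - 1) _ hIH).trans ?_
      rw [Nat.cast_le]
      have e1 : t + j - 1 = (t - 1) + j := by omega
      have e2 : i - 1 = k + j := by omega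
      rw [e1, e2]
      exact arith1' (t - 1) k j hu hj hk1
  rcases eq_or_lt_of_le hi with h1 | h1
  · -- i = 1
    subst h1
    rw [hβ1]
    calc (Polynomial.C n * Polynomial.X : Polynomial ℕ).degree
        ≤ (Polynomial.C (n : ℕ) : Polynomial ℕ).degree + Polynomial.X.degree :=
          degree_mul_le _ _
      _ ≤ 0 + (1 : WithBot ℕ) := add_le_add degree_C_le degree_X_le
      _ ≤ (((t - 1) * (1 - 1) + 1 : ℕ) : WithBot ℕ) := by norm_num
  · rcases le_or_gt i n with h2 | h2
    · -- 2 ≤ i ≤ n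
      rw [hβmid i h1 h2]
      refine le_trans (degree_add_le _ _) (max_le ?_ ?_)
      · calc (Polynomial.C (Nat.choose n i) * Polynomial.X ^ i : Polynomial ℕ).degree
            ≤ (Polynomial.C (Nat.choose n i) : Polynomial ℕ).degree +
                (Polynomial.X ^ i : Polynomial ℕ).degree := degree_mul_le _ _
          _ ≤ 0 + (i : WithBot ℕ) := by
              rw [degree_X_pow]; exact add_le_add_left degree_C_le _
          _ = (i : WithBot ℕ) := by rw [zero_add]
          _ ≤ (((t - 1) * (i - 1) + 1 : ℕ) : WithBot ℕ) := by
              rw [Nat.cast_le]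
              obtain ⟨m, rfl⟩ := Nat.exists_eq_add_of_le hi
              have h : m ≤ (t - 1) * m := Nat.le_mul_of_pos_left m (by omega)
              have e : 1 + m - 1 = m := by omega
              rw [e]
              omega
      · refine (degree_sum_le _ _).trans (Finset.sup_le fun j hj => ?_)
        rw [Finset.mem_Icc] at hj
        exact key j (i - j - 1) hj.1 (by omega) (by omega)
    · rcases Nat.lt_or_ge i (n + 2) with h3 | h3
      · -- i = n + 1
        have hi1 : i = n + 1 := by omega
        rw [hβoth i (Or.inl hi1)]
        refine (degree_sum_le _ _).trans (Finset.sup_le fun j hj => ?_)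
        rw [Finset.mem_Icc] at hj
        exact key j (i - j - 1) hj.1 (by omega) (by omega)
      · rcases eq_or_lt_of_le h3 with h4 | h4
        · -- i = n + 2
          subst h4
          rw [hβn2]
          refine le_trans (degree_add_le _ _) (max_le ?_ ?_)
          · refine (degree_sum_le _ _).trans (Finset.sup_le fun j hj => ?_)
            rw [Finset.mem_Icc] at hj
            have e : n - j + 1 = (n + 2) - j - 1 := by omega
            rw [e]
            exact key j ((n + 2) - j - 1) hj.1 (by omega) (by omega)
          · rw [degree_X_pow, Nat.cast_le]
            have e : n + 2 - 1 = n + 1 := by omega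
            rw [e]
            set A := (t - 1) * (n + 1) with hA
            omega
        · -- i ≥ n + 3
          rw [hβoth i (Or.inr (by omega))]
          refine (degree_sum_le _ _).trans (Finset.sup_le fun j hj => ?_)
          rw [Finset.mem_Icc] at hj
          exact key j (i - j - 1) hj.1 (by omega) (by omega)
end
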